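/- For all n ∈ ℕ and every infinite set L ⊆ ℕ, the repeated average a_n^L satisfies ‖a_n^L‖_{ℓ_1} = 1, all of its coordinates are nonnegative, and its support is the unique maximal initial segment of L that belongs to S_n. -/
import Mathlib


/-- The first Schreier family: finite sets `F` with `|F| ≤ min F`. -/
def SchreierOne : Set (Finset ℕ) := {F | ∀ k ∈ F, F.card ≤ k}

/-- The minimum of a finite set of naturals (0 for the empty set). -/
noncomputable def finMin (F : Finset ℕ) : ℕ := sInf {k | k ∈ F}

/-- The convolution `P[Q]` of two families of finite subsets of ℕ:
unions of successive members of `Q` whose minima form a set in `P`. -/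
def conv (P Q : Set (Finset ℕ)) : Set (Finset ℕ) :=
  {U | ∃ (d : ℕ) (F : Fin d → Finset ℕ),
    (∀ i, F i ∈ Q) ∧ (∀ i, (F i).Nonempty) ∧
    (∀ i j : Fin d, i < j → ∀ a ∈ F i, ∀ b ∈ F j, a < b) ∧
    (Finset.univ.image fun i => finMin (F i)) ∈ P ∧
    U = Finset.univ.biUnion F}

/-- The modified convolution `P[Q]_M`: unions of pairwise disjoint members of `Q`
whose minima form a set in `P`. -/
def mconv (P Q : Set (Finset ℕ)) : Set (Finset ℕ) :=
  {U | ∃ (d : ℕ) (F : Fin d → Finset ℕ),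
    (∀ i, F i ∈ Q) ∧ (∀ i, (F i).Nonempty) ∧
    (∀ i j : Fin d, i ≠ j → Disjoint (F i) (F j)) ∧
    (Finset.univ.image fun i => finMin (F i)) ∈ P ∧
    U = Finset.univ.biUnion F}

/-- The Schreier families `S_n` (indexed so that `Schreier 1 = S_1`,
`Schreier (n+1) = S_1[S_n]`). -/
def Schreier : ℕ → Set (Finset ℕ)
  | 0 => {F | F.card ≤ 1}
  | 1 => SchreierOne
  | (n+2) => conv SchreierOne (Schreier (n+1))

/-- The modified Schreier families `S^M_n`. -/
def SchreierM : ℕ → Set (Finset ℕ)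
  | 0 => {F | F.card ≤ 1}
  | 1 => SchreierOne
  | (n+2) => mconv SchreierOne (SchreierM (n+1))

/-- The repeated averages `a_n^L ∈ c_00` for an (infinite) set `L ⊆ ℕ`:
`a_0^L = e_{min L}`, and `a_{n+1}^L = (1/l_1)(a_n^{L_1} + ... + a_n^{L_{l_1}})`
where `l_1 = min L`, `L_1 = L` and `L_{k+1} = L_k \ supp a_n^{L_k}`. -/
noncomputable def ra : ℕ → Set ℕ → (ℕ →₀ ℝ) := fun n =>
  Nat.rec (motive := fun _ => Set ℕ → (ℕ →₀ ℝ))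
    (fun L => Finsupp.single (sInf L) 1)
    (fun _ prev L =>
      (((sInf L : ℕ) : ℝ))⁻¹ •
        ∑ k ∈ Finset.range (sInf L),
          prev (Nat.rec (motive := fun _ => Set ℕ) L
            (fun _ M => M \ ↑(prev M).support) k))
    n

lemma finMin_mem {F : Finset ℕ} (h : F.Nonempty) : finMin F ∈ F := by
  have : {k | k ∈ F}.Nonempty := ⟨h.choose, h.choose_spec⟩
  exact Nat.sInf_mem this

lemma finMin_le {F : Finset ℕ} {a : ℕ} (h : a ∈ F) : finMin F ≤ a :=
  Nat.sInf_le h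

lemma finMin_mono {F G : Finset ℕ} (h : F ⊆ G) (hF : F.Nonempty) :
    finMin G ≤ finMin F := finMin_le (h (finMin_mem hF))

lemma empty_mem_schreierOne : (∅ : Finset ℕ) ∈ SchreierOne := by
  intro k hk; simp at hk

/-- strictly increasing mins for ordered nonempty blocks -/
lemma mins_strictMono {d : ℕ} {F : Fin d → Finset ℕ}
    (hne : ∀ i, (F i).Nonempty)
    (hord : ∀ i j : Fin d, i < j → ∀ a ∈ F i, ∀ b ∈ F j, a < b)
    {i j : Fin d} (hij : i < j) : finMin (F i) < finMin (F j) :=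
  hord i j hij _ (finMin_mem (hne i)) _ (finMin_mem (hne j))

lemma mins_card {d : ℕ} {F : Fin d → Finset ℕ}
    (hne : ∀ i, (F i).Nonempty)
    (hord : ∀ i j : Fin d, i < j → ∀ a ∈ F i, ∀ b ∈ F j, a < b) :
    (Finset.univ.image fun i => finMin (F i)).card = d := by
  rw [Finset.card_image_of_injective _ ?_, Finset.card_univ, Fintype.card_fin]
  intro i j hij
  rcases lt_trichotomy i j with h | h | h
  · exact absurd hij (mins_strictMono hne hord h).ne
  · exact h
  · exact absurd hij.symm (mins_strictMono hne hord h).ne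

lemma schreier_succ (n : ℕ) : Schreier (n+1) = conv SchreierOne (Schreier n) := by
  match n with
  | (m+1) => rfl
  | 0 =>
    ext U
    constructor
    · intro hU
      by_cases hUe : U.Nonempty
      · set e := U.orderIsoOfFin rfl with he
        refine ⟨U.card, fun i => {(e i : ℕ)}, ?_, ?_, ?_, ?_, ?_⟩
        · intro i; simp [Schreier]
        · intro i; exact ⟨_, Finset.mem_singleton_self _⟩
        · intro i j hij a ha b hb
          simp only [Finset.mem_singleton] at ha hb
          subst ha; subst hb
          exact_mod_cast e.strictMono hij
        · have h1 : ∀ i : Fin U.card, finMin ({(e i : ℕ)} : Finset ℕ) = (e i : ℕ) := by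
            intro i
            have : {k | k ∈ ({(e i : ℕ)} : Finset ℕ)} = {(e i : ℕ)} := by
              ext x; simp
            simp [finMin, this]
          have himg : (Finset.univ.image fun i => finMin ({(e i : ℕ)} : Finset ℕ)) = U := by
            apply Finset.eq_of_subset_of_card_le
            · intro x hx
              simp only [Finset.mem_image] at hx
              obtain ⟨i, _, hi⟩ := hx
              rw [h1] at hi
              exact hi ▸ (e i).2
            · have hinj : Function.Injective (fun i : Fin U.card => finMin ({(e i : ℕ)} : Finset ℕ)) := by
                intro i j hij
                simp only [h1] at hij
                exact e.injective (Subtype.ext hij)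
              calc U.card = (Finset.univ : Finset (Fin U.card)).card := by
                    rw [Finset.card_univ, Fintype.card_fin]
                _ = _ := (Finset.card_image_of_injective _ hinj).symm
                _ ≤ _ := le_rfl
          rw [himg]; exact hU
        · ext x
          simp only [Finset.mem_biUnion, Finset.mem_univ, true_and, Finset.mem_singleton]
          constructor
          · intro hx
            exact ⟨e.symm ⟨x, hx⟩, by simp⟩
          · rintro ⟨i, rfl⟩
            exact (e i).2
      · rw [Finset.not_nonempty_iff_eq_empty] at hUe
        subst hUe
        refine ⟨0, fun i => ∅, fun i => i.elim0, fun i => i.elim0, fun i => i.elim0,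
          by simpa using empty_mem_schreierOne, by simp⟩
    · rintro ⟨d, F, hQ, hne, hord, hmins, rfl⟩
      have hsing : ∀ i, F i = {finMin (F i)} := by
        intro i
        have h1 : (F i).card ≤ 1 := hQ i
        have h2 : (F i).card = 1 := le_antisymm h1 (Finset.card_pos.mpr (hne i))
        obtain ⟨a, ha⟩ := Finset.card_eq_one.mp h2
        have hm := finMin_mem (hne i)
        rw [ha, Finset.mem_singleton] at hm
        rw [ha, hm]
      have : Finset.univ.biUnion F = Finset.univ.image fun i => finMin (F i) := by
        ext x
        simp only [Finset.mem_biUnion, Finset.mem_univ, true_and, Finset.mem_image]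
        constructor
        · rintro ⟨i, hi⟩
          rw [hsing i, Finset.mem_singleton] at hi
          exact ⟨i, hi.symm⟩
        · rintro ⟨i, rfl⟩
          exact ⟨i, finMin_mem (hne i)⟩
      rw [this]
      exact hmins

lemma schreier_hered : ∀ n : ℕ, ∀ F ∈ Schreier n, ∀ G ⊆ F, G ∈ Schreier n := by
  intro n
  induction n with
  | zero =>
    intro F hF G hG
    exact le_trans (Finset.card_le_card hG) hF
  | succ n ih =>
    rw [schreier_succ]
    intro F hF G hG
    obtain ⟨d, Fb, hQ, hne, hord, hmins, rfl⟩ := hF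
    classical
    set t : Finset (Fin d) := Finset.univ.filter (fun i => (Fb i ∩ G).Nonempty) with ht
    set d' := t.card with hd'
    set σ := t.orderIsoOfFin rfl with hσ
    refine ⟨d', fun j => Fb (σ j) ∩ G, ?_, ?_, ?_, ?_, ?_⟩
    · intro j
      rcases Nat.eq_zero_or_pos n with rfl | hn
      · exact le_trans (Finset.card_le_card Finset.inter_subset_left) (hQ _)
      · obtain ⟨m, rfl⟩ := Nat.exists_eq_add_of_le hn
        exact ih _ (hQ _) _ Finset.inter_subset_left
    · intro j
      have := (σ j).2
      exact (Finset.mem_filter.mp this).2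
    · intro i j hij a ha b hb
      exact hord (σ i) (σ j) (σ.strictMono hij) a (Finset.mem_inter.mp ha).1 b
        (Finset.mem_inter.mp hb).1
    · intro m hm
      simp only [Finset.mem_image, Finset.mem_univ, true_and] at hm
      obtain ⟨j, rfl⟩ := hm
      have hsubne : (Fb (σ j) ∩ G).Nonempty := by
        have := (σ j).2
        exact (Finset.mem_filter.mp this).2
      have h1 : finMin (Fb (σ j)) ≤ finMin (Fb (σ j) ∩ G) :=
        finMin_mono Finset.inter_subset_left hsubne
      have h2 : d ≤ finMin (Fb (σ j)) := by
        have := hmins (finMin (Fb (σ j))) (Finset.mem_image.mpr ⟨σ j, Finset.mem_univ _, rfl⟩)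
        rwa [mins_card hne hord] at this
      calc (Finset.univ.image fun j => finMin (Fb (σ j) ∩ G)).card
          ≤ (Finset.univ : Finset (Fin d')).card := Finset.card_image_le
        _ = d' := by rw [Finset.card_univ, Fintype.card_fin]
        _ ≤ d := by simpa using Finset.card_le_univ t
        _ ≤ finMin (Fb (σ j)) := h2
        _ ≤ _ := h1
    · ext x
      simp only [Finset.mem_biUnion, Finset.mem_univ, true_and, Finset.mem_inter]
      constructor
      · intro hx
        have hxF : x ∈ Finset.univ.biUnion Fb := hG hx
        simp only [Finset.mem_biUnion, Finset.mem_univ, true_and] at hxF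
        obtain ⟨i, hi⟩ := hxF
        have hit : i ∈ t := by
          rw [ht, Finset.mem_filter]
          exact ⟨Finset.mem_univ _, ⟨x, Finset.mem_inter.mpr ⟨hi, hx⟩⟩⟩
        exact ⟨σ.symm ⟨i, hit⟩, by simpa using hi, hx⟩
      · rintro ⟨j, _, hx⟩
        exact hx

/-- The sequence `L_1, L_2, ...` of sets used in defining `a_{n+1}^L`. -/
noncomputable def raSeq (n : ℕ) (L : Set ℕ) : ℕ → Set ℕ :=
  fun k => Nat.rec (motive := fun _ => Set ℕ) L
    (fun _ M => M \ ↑(ra n M).support) k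

lemma ra_zero (L : Set ℕ) : ra 0 L = Finsupp.single (sInf L) 1 := rfl

lemma ra_succ (n : ℕ) (L : Set ℕ) :
    ra (n+1) L = (((sInf L : ℕ) : ℝ))⁻¹ •
      ∑ k ∈ Finset.range (sInf L), ra n (raSeq n L k) := rfl

lemma raSeq_zero (n : ℕ) (L : Set ℕ) : raSeq n L 0 = L := rfl

lemma raSeq_succ (n : ℕ) (L : Set ℕ) (k : ℕ) :
    raSeq n L (k+1) = raSeq n L k \ ↑(ra n (raSeq n L k)).support := rfl

/-- For every `n` and every infinite `L ⊆ ℕ` (with `0 ∉ L`, since the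
natural numbers here start at 1), the repeated average `a_n^L` has `ℓ_1`-norm one,
nonnegative coordinates, and its support is the unique maximal initial segment of `L`
belonging to `S_n`. -/
theorem repeated_average_props (n : ℕ) (L : Set ℕ) (hL : L.Infinite) (h0 : 0 ∉ L) :
    (∀ k, 0 ≤ ra n L k) ∧
    ((ra n L).sum fun _ v => |v|) = 1 ∧
    ↑(ra n L).support ⊆ L ∧
    (ra n L).support ∈ Schreier n ∧
    (∀ a ∈ (ra n L).support, ∀ b ∈ L, b ≤ a → b ∈ (ra n L).support) ∧
    (∀ G : Finset ℕ, ↑G ⊆ L → (∀ a ∈ G, ∀ b ∈ L, b ≤ a → b ∈ G) →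
      G ∈ Schreier n → G ⊆ (ra n L).support) := by
  induction n generalizing L with
  | zero =>
    have hm : sInf L ∈ L := Nat.sInf_mem hL.nonempty
    have hsupp : (ra 0 L).support = {sInf L} := by
      rw [ra_zero]; exact Finsupp.support_single_ne_zero _ one_ne_zero
    refine ⟨?_, ?_, ?_, ?_, ?_, ?_⟩
    · intro k
      rw [ra_zero, Finsupp.single_apply]
      split <;> norm_num
    · rw [ra_zero, Finsupp.sum_single_index] <;> simp
    · rw [hsupp]
      intro x hx
      rw [Finset.coe_singleton, Set.mem_singleton_iff] at hx
      exact hx ▸ hm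
    · rw [hsupp]
      show ({sInf L} : Finset ℕ).card ≤ 1
      simp
    · rw [hsupp]
      intro a ha b hb hba
      rw [Finset.mem_singleton] at ha ⊢
      subst ha
      exact le_antisymm hba (Nat.sInf_le hb)
    · intro G hGL hGinit hG
      rw [hsupp]
      intro x hx
      have h1 : sInf L ∈ G := hGinit x hx (sInf L) hm (Nat.sInf_le (hGL hx))
      have h2 : G.card ≤ 1 := hG
      rw [Finset.mem_singleton]
      by_contra hne
      exact absurd h2 (not_le.mpr (Finset.one_lt_card.mpr ⟨x, hx, sInf L, h1, hne⟩))
  | succ n ih =>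
    have hlL : sInf L ∈ L := Nat.sInf_mem hL.nonempty
    have hl1 : 1 ≤ sInf L := Nat.one_le_iff_ne_zero.mpr (fun h => h0 (h ▸ hlL))
    have hlR : (0:ℝ) < ((sInf L : ℕ) : ℝ) := by exact_mod_cast hl1
    have hseq : ∀ k, raSeq n L k ⊆ L ∧ (raSeq n L k).Infinite := by
      intro k
      induction k with
      | zero => exact ⟨subset_rfl, hL⟩
      | succ k ihk =>
        rw [raSeq_succ]
        exact ⟨Set.diff_subset.trans ihk.1, ihk.2.diff (Finset.finite_toSet _)⟩
    have hseq0 : ∀ k, 0 ∉ raSeq n L k := fun k h => h0 ((hseq k).1 h)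
    have IH := fun k => ih (raSeq n L k) (hseq k).2 (hseq0 k)
    have hpos : ∀ k x, 0 ≤ ra n (raSeq n L k) x := fun k => (IH k).1
    have hsum : ∀ k, ((ra n (raSeq n L k)).sum fun _ v => |v|) = 1 := fun k => (IH k).2.1
    have hsub : ∀ k, ↑(ra n (raSeq n L k)).support ⊆ raSeq n L k := fun k => (IH k).2.2.1
    have hsch : ∀ k, (ra n (raSeq n L k)).support ∈ Schreier n := fun k => (IH k).2.2.2.1
    have hinit : ∀ k, ∀ a ∈ (ra n (raSeq n L k)).support, ∀ b ∈ raSeq n L k, b ≤ a →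
        b ∈ (ra n (raSeq n L k)).support := fun k => (IH k).2.2.2.2.1
    have hmax : ∀ k, ∀ G : Finset ℕ, ↑G ⊆ raSeq n L k →
        (∀ a ∈ G, ∀ b ∈ raSeq n L k, b ≤ a → b ∈ G) →
        G ∈ Schreier n → G ⊆ (ra n (raSeq n L k)).support := fun k => (IH k).2.2.2.2.2
    have hne : ∀ k, (ra n (raSeq n L k)).support.Nonempty := by
      intro k
      rw [Finsupp.support_nonempty_iff]
      intro h
      have h1 := hsum k
      rw [h, Finsupp.sum_zero_index] at h1
      norm_num at h1
    have hmono : ∀ j k, j ≤ k → raSeq n L k ⊆ raSeq n L j := by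
      intro j k hjk
      induction hjk with
      | refl => exact subset_rfl
      | step _ ihk => exact fun x hx => ihk (by rw [raSeq_succ] at hx; exact hx.1)
    have hordS : ∀ j k, j < k → ∀ a ∈ (ra n (raSeq n L j)).support,
        ∀ b ∈ (ra n (raSeq n L k)).support, a < b := by
      intro j k hjk a ha b hb
      by_contra h
      push_neg at h
      have hbk : b ∈ raSeq n L (j+1) := hmono _ _ hjk (hsub k hb)
      rw [raSeq_succ] at hbk
      exact hbk.2 (Finset.mem_coe.mpr (hinit j a ha b hbk.1 h))
    have hfx : ∀ x, ra (n+1) L x =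
        ((sInf L : ℕ) : ℝ)⁻¹ * ∑ k ∈ Finset.range (sInf L), ra n (raSeq n L k) x := by
      intro x
      rw [ra_succ, Finsupp.smul_apply, Finsupp.finset_sum_apply, smul_eq_mul]
    have hnonneg : ∀ x, 0 ≤ ra (n+1) L x := by
      intro x
      rw [hfx]
      exact mul_nonneg (inv_nonneg.mpr hlR.le) (Finset.sum_nonneg fun k _ => hpos k x)
    have hsupp : (ra (n+1) L).support =
        (Finset.range (sInf L)).biUnion (fun k => (ra n (raSeq n L k)).support) := by
      ext x
      rw [Finsupp.mem_support_iff, hfx]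
      simp only [Finset.mem_biUnion, Finset.mem_range]
      constructor
      · intro h
        by_contra hc
        push_neg at hc
        have hz : ∀ k ∈ Finset.range (sInf L), ra n (raSeq n L k) x = 0 := by
          intro k hk
          rw [Finset.mem_range] at hk
          by_contra h'
          exact (hc k hk) (Finsupp.mem_support_iff.mpr h')
        rw [Finset.sum_eq_zero hz, mul_zero] at h
        exact h rfl
      · rintro ⟨k, hk, hxk⟩
        have hpos' : 0 < ∑ j ∈ Finset.range (sInf L), ra n (raSeq n L j) x := by
          apply Finset.sum_pos' (fun j _ => hpos j x)
          exact ⟨k, Finset.mem_range.mpr hk,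
            lt_of_le_of_ne (hpos k x) (Ne.symm (Finsupp.mem_support_iff.mp hxk))⟩
        exact (mul_pos (inv_pos.mpr hlR) hpos').ne'
    have hsumg : ∀ k, ∑ x ∈ (ra n (raSeq n L k)).support, ra n (raSeq n L k) x = 1 := by
      intro k
      have h1 := hsum k
      rw [Finsupp.sum] at h1
      rw [← h1]
      exact Finset.sum_congr rfl fun x _ => (abs_of_nonneg (hpos k x)).symm
    refine ⟨hnonneg, ?_, ?_, ?_, ?_, ?_⟩
    · -- ℓ1 norm one
      have habs : ((ra (n+1) L).sum fun _ v => |v|) =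
          ∑ x ∈ (ra (n+1) L).support, ra (n+1) L x := by
        rw [Finsupp.sum]
        exact Finset.sum_congr rfl fun x _ => abs_of_nonneg (hnonneg x)
      rw [habs]
      calc ∑ x ∈ (ra (n+1) L).support, ra (n+1) L x
          = ∑ x ∈ (ra (n+1) L).support,
              ((sInf L : ℕ) : ℝ)⁻¹ * ∑ k ∈ Finset.range (sInf L), ra n (raSeq n L k) x :=
            Finset.sum_congr rfl fun x _ => hfx x
        _ = ((sInf L : ℕ) : ℝ)⁻¹ * ∑ x ∈ (ra (n+1) L).support,
              ∑ k ∈ Finset.range (sInf L), ra n (raSeq n L k) x := by rw [Finset.mul_sum]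
        _ = ((sInf L : ℕ) : ℝ)⁻¹ * ∑ k ∈ Finset.range (sInf L),
              ∑ x ∈ (ra (n+1) L).support, ra n (raSeq n L k) x := by rw [Finset.sum_comm]
        _ = ((sInf L : ℕ) : ℝ)⁻¹ * ∑ k ∈ Finset.range (sInf L), (1:ℝ) := by
            congr 1
            apply Finset.sum_congr rfl
            intro k hk
            rw [← hsumg k]
            apply (Finset.sum_subset ?_ ?_).symm
            · rw [hsupp]
              exact fun x hx => Finset.mem_biUnion.mpr ⟨k, hk, hx⟩
            · intro x _ hx
              exact Finsupp.notMem_support_iff.mp hx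
        _ = 1 := by
            rw [Finset.sum_const, Finset.card_range, nsmul_eq_mul, mul_one]
            exact inv_mul_cancel₀ hlR.ne'
    · -- support ⊆ L
      rw [hsupp]
      intro x hx
      rw [Finset.coe_biUnion] at hx
      simp only [Set.mem_iUnion, Finset.mem_coe, Finset.mem_range] at hx
      obtain ⟨k, _, hxk⟩ := hx
      exact (hseq k).1 (hsub k hxk)
    · -- Schreier (n+1)
      rw [schreier_succ]
      refine ⟨sInf L, fun i : Fin (sInf L) => (ra n (raSeq n L i)).support,
        fun i => hsch i, fun i => hne i, ?_, ?_, ?_⟩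
      · intro i j hij a ha b hb
        exact hordS i j hij a ha b hb
      · intro m hm
        simp only [Finset.mem_image, Finset.mem_univ, true_and] at hm
        obtain ⟨i, rfl⟩ := hm
        have h1 : finMin (ra n (raSeq n L i)).support ∈ L :=
          (hseq i).1 (hsub i (finMin_mem (hne i)))
        calc (Finset.univ.image fun i : Fin (sInf L) =>
                finMin (ra n (raSeq n L i)).support).card
            ≤ (Finset.univ : Finset (Fin (sInf L))).card := Finset.card_image_le
          _ = sInf L := by rw [Finset.card_univ, Fintype.card_fin]
          _ ≤ _ := Nat.sInf_le h1
      · rw [hsupp]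
        ext x
        simp only [Finset.mem_biUnion, Finset.mem_range, Finset.mem_univ, true_and]
        constructor
        · rintro ⟨k, hk, hxk⟩
          exact ⟨⟨k, hk⟩, hxk⟩
        · rintro ⟨i, hxi⟩
          exact ⟨i, i.isLt, hxi⟩
    · -- initial segment
      have claim : ∀ b ∈ L, ∀ k, b ∈ raSeq n L k ∨ ∃ i < k, b ∈ (ra n (raSeq n L i)).support := by
        intro b hb k
        induction k with
        | zero => exact Or.inl hb
        | succ k ihk =>
          rcases ihk with h | ⟨i, hi, hsi⟩
          · by_cases hbS : b ∈ (ra n (raSeq n L k)).support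
            · exact Or.inr ⟨k, Nat.lt_succ_self k, hbS⟩
            · left
              rw [raSeq_succ]
              exact ⟨h, fun hc => hbS (Finset.mem_coe.mp hc)⟩
          · exact Or.inr ⟨i, Nat.lt_succ_of_lt hi, hsi⟩
      intro a ha b hb hba
      rw [hsupp] at ha ⊢
      simp only [Finset.mem_biUnion, Finset.mem_range] at ha ⊢
      obtain ⟨j, hj, haj⟩ := ha
      rcases claim b hb j with h | ⟨i, hi, hsi⟩
      · exact ⟨j, hj, hinit j a haj b h hba⟩
      · exact ⟨i, hi.trans hj, hsi⟩
    · -- maximality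
      intro G hGL hGinit hGmem
      rcases G.eq_empty_or_nonempty with rfl | hGne
      · exact Finset.empty_subset _
      rw [schreier_succ] at hGmem
      obtain ⟨d, Fb, hQ, hneb, hordb, hminsb, hGeq⟩ := hGmem
      have hlG : sInf L ∈ G := by
        obtain ⟨x, hx⟩ := hGne
        exact hGinit x hx (sInf L) hlL (Nat.sInf_le (hGL hx))
      have hdl : d ≤ sInf L := by
        have h1 : sInf L ∈ Finset.univ.biUnion Fb := hGeq ▸ hlG
        obtain ⟨j, _, hj⟩ := Finset.mem_biUnion.mp h1
        have h2 : d ≤ finMin (Fb j) := by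
          have := hminsb _ (Finset.mem_image.mpr ⟨j, Finset.mem_univ _, rfl⟩)
          rwa [mins_card hneb hordb] at this
        exact h2.trans (finMin_le hj)
      have cover : ∀ i : ℕ, ∀ j : Fin d, (j:ℕ) < i → ∀ x ∈ Fb j,
          ∃ k < i, x ∈ (ra n (raSeq n L k)).support := by
        intro i
        induction i with
        | zero => exact fun j hj => absurd hj (Nat.not_lt_zero _)
        | succ i ihi =>
          intro j hj x hxj
          rcases Nat.lt_or_ge (j:ℕ) i with h | h
          · obtain ⟨k, hk, hxk⟩ := ihi j h x hxj
            exact ⟨k, Nat.lt_succ_of_lt hk, hxk⟩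
          have hji : (j:ℕ) = i := le_antisymm (Nat.lt_succ_iff.mp hj) h
          by_cases hxS : ∃ k < i, x ∈ (ra n (raSeq n L k)).support
          · obtain ⟨k, hk, hk'⟩ := hxS
            exact ⟨k, Nat.lt_succ_of_lt hk, hk'⟩
          push_neg at hxS
          have hxF' : x ∈ Fb j \ (Finset.range i).biUnion
              (fun k => (ra n (raSeq n L k)).support) := by
            rw [Finset.mem_sdiff]
            refine ⟨hxj, fun hc => ?_⟩
            obtain ⟨k, hk, hxk⟩ := Finset.mem_biUnion.mp hc
            exact hxS k (Finset.mem_range.mp hk) hxk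
          have hF'sub : ∀ y ∈ Fb j \ (Finset.range i).biUnion
              (fun k => (ra n (raSeq n L k)).support), (y:ℕ) ∈ raSeq n L i := by
            intro y hy
            rw [Finset.mem_sdiff] at hy
            have hyL : (y:ℕ) ∈ L :=
              hGL (hGeq ▸ Finset.mem_biUnion.mpr ⟨j, Finset.mem_univ _, hy.1⟩)
            have hnotS : ∀ k < i, y ∉ (ra n (raSeq n L k)).support := by
              intro k hk hyk
              exact hy.2 (Finset.mem_biUnion.mpr ⟨k, Finset.mem_range.mpr hk, hyk⟩)
            have key : ∀ m, m ≤ i → y ∈ raSeq n L m := by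
              intro m
              induction m with
              | zero => exact fun _ => hyL
              | succ m ihm =>
                intro hmi
                have h1 := ihm (Nat.le_of_succ_le hmi)
                rw [raSeq_succ]
                exact ⟨h1, fun hc => hnotS m hmi (Finset.mem_coe.mp hc)⟩
            exact key i le_rfl
          have hF'init : ∀ a ∈ Fb j \ (Finset.range i).biUnion
                (fun k => (ra n (raSeq n L k)).support),
              ∀ b ∈ raSeq n L i, b ≤ a → b ∈ Fb j \ (Finset.range i).biUnion
                (fun k => (ra n (raSeq n L k)).support) := by
            intro a ha b hbMi hba
            have hbL : b ∈ L := (hseq i).1 hbMi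
            have haG : a ∈ G :=
              hGeq ▸ Finset.mem_biUnion.mpr ⟨j, Finset.mem_univ _, (Finset.mem_sdiff.mp ha).1⟩
            have hbG : b ∈ G := hGinit a haG b hbL hba
            rw [hGeq] at hbG
            obtain ⟨m, _, hbm⟩ := Finset.mem_biUnion.mp hbG
            have hbnotS : ∀ k < i, b ∉ (ra n (raSeq n L k)).support := by
              intro k hk hbk
              have h2 := hmono (k+1) i hk hbMi
              rw [raSeq_succ] at h2
              exact h2.2 (Finset.mem_coe.mpr hbk)
            rcases lt_trichotomy m j with hmj | hmj | hmj
            · have hmi : (m:ℕ) < i := hji ▸ hmj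
              obtain ⟨k, hk, hbk⟩ := ihi m hmi b hbm
              exact absurd hbk (hbnotS k hk)
            · refine Finset.mem_sdiff.mpr ⟨hmj ▸ hbm, fun hc => ?_⟩
              obtain ⟨k, hk, hbk⟩ := Finset.mem_biUnion.mp hc
              exact hbnotS k (Finset.mem_range.mp hk) hbk
            · exact absurd (hordb j m hmj a (Finset.mem_sdiff.mp ha).1 b hbm)
                (not_lt.mpr hba)
          have hF'sch : Fb j \ (Finset.range i).biUnion
              (fun k => (ra n (raSeq n L k)).support) ∈ Schreier n :=
            schreier_hered n (Fb j) (hQ j) _ Finset.sdiff_subset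
          have hfin := hmax i _ (fun y hy => hF'sub y (Finset.mem_coe.mp hy)) hF'init hF'sch
          exact ⟨i, Nat.lt_succ_self i, hfin hxF'⟩
      intro x hx
      rw [hGeq] at hx
      obtain ⟨j, _, hxj⟩ := Finset.mem_biUnion.mp hx
      obtain ⟨k, hk, hxk⟩ := cover d j j.isLt x hxj
      rw [hsupp]
      exact Finset.mem_biUnion.mpr ⟨k, Finset.mem_range.mpr (lt_of_lt_of_le hk hdl), hxk⟩
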